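/- arXiv:2110.07854 — 3 statements merged into one kernel-verified Lean document; each statement's English description precedes it below -/
import Mathlib

section
/- (q ↦ q^{-1} functional equations.) Fix an integer N ≥ 2 and β ∈ ℂ with Re(β) > −2/N. For real q > 0 define G_N(q,β) := N!·q^{(1/2)(N(N−1)/2)β}·F_N(log q, β) and H_N(q,β) := N!·Σ_{k=0}^{N} [cosh((log q / 2)·(N + (N(N−1)/2)β)·(1 − 2k/N)) / (2·cosh(log q / 2))^N]·F_{N−k}(log q, β)·F_k(log q, β). Then q ↦ G_N(q,β) and q ↦ H_N(q,β) are smooth functions on (0,∞) and satisfy G_N(q^{−1}, β) = q^{−(N(N−1)/2)β}·G_N(q, β) and H_N(q^{−1}, β) = H_N(q, β) for all q > 0. -/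
open MeasureTheory
open scoped LinearAlgebra.Projectivization

namespace LogCoulomb

noncomputable section

/-! ### The projective line over `ℚ_p`, its spherical metric and `PGL₂`-invariant measure -/

variable (p : ℕ) [Fact p.Prime]

instance : MeasurableSpace ℚ_[p] := borel _
instance : BorelSpace ℚ_[p] := ⟨rfl⟩

/-- The projective line over `ℚ_p`. -/
abbrev P1 := ℙ ℚ_[p] (Fin 2 → ℚ_[p])

instance : TopologicalSpace (P1 p) :=
  inferInstanceAs (TopologicalSpace (Quotient _))

instance : MeasurableSpace (P1 p) := borel _
instance : BorelSpace (P1 p) := ⟨rfl⟩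

/-- Spherical distance on homogeneous coordinates:
`δ((x₀,x₁),(y₀,y₁)) = |x₀y₁ - x₁y₀| / (max(|x₀|,|x₁|) ⬝ max(|y₀|,|y₁|))`. -/
def sdelta (x y : Fin 2 → ℚ_[p]) : ℝ :=
  ‖x 0 * y 1 - x 1 * y 0‖ / (max ‖x 0‖ ‖x 1‖ * max ‖y 0‖ ‖y 1‖)

/-- The spherical metric on `ℙ¹(ℚ_p)`, defined via the canonical representatives. -/
def pdelta (ξ η : P1 p) : ℝ := sdelta p ξ.rep η.rep

open Classical in
/-- The action of a matrix on `ℙ¹(ℚ_p)`: `[x₀:x₁] ↦ [a x₀ + b x₁ : c x₀ + d x₁]`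
(well-defined, and given by the first branch of the `if`, whenever `A` is invertible). -/
def mobius (A : Matrix (Fin 2) (Fin 2) ℚ_[p]) (ξ : P1 p) : P1 p :=
  if h : A.mulVec ξ.rep ≠ 0 then Projectivization.mk ℚ_[p] (A.mulVec ξ.rep) h else ξ

/-- `ν` is invariant under the action of `GL₂(ℤ_p)` on `ℙ¹(ℚ_p)`; membership of the matrix
entries in `ℤ_p`, and invertibility of the matrix over `ℤ_p`, are phrased via the `p`-adic
norm on `ℚ_p`. -/
def IsGLInvariant (ν : Measure (P1 p)) : Prop :=
  ∀ A : Matrix (Fin 2) (Fin 2) ℚ_[p],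
    (∀ i j, ‖A i j‖ ≤ 1) → ‖A.det‖ = 1 →
      ∀ M : Set (P1 p), MeasurableSet M → ν (mobius p A '' M) = ν M

/-- The embedding `ι : ℚ_p → ℙ¹(ℚ_p)`, `x ↦ [x : 1]`. -/
def iota (x : ℚ_[p]) : P1 p :=
  Projectivization.mk ℚ_[p] ![x, 1] (by
    intro h
    have h1 := congrFun h 1
    simp at h1)

/-! ### Canonical partition functions -/

/-- The pairs `(i,j)` with `i < j`. -/
def pairs (N : ℕ) : Finset (Fin N × Fin N) := Finset.univ.filter fun q => q.1 < q.2

/-- The closed unit ball `ℤ_p = R` inside `ℚ_p`. -/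
def Zball : Set ℚ_[p] := {x | ‖x‖ ≤ 1}

/-- The open unit ball `pℤ_p = P` inside `ℚ_p`. -/
def Pball : Set ℚ_[p] := {x | ‖x‖ < 1}

/-- The one-component canonical partition function
`Z_N(X, β) = ∫_{X^N} ∏_{i<j} |x_i - x_j|^β dμ^N` (as a Bochner integral, whether or not it
converges absolutely). -/
def ZN (μ : Measure ℚ_[p]) [SigmaFinite μ] (X : Set ℚ_[p]) (N : ℕ) (β : ℂ) : ℂ :=
  ∫ x : Fin N → ℚ_[p], ∏ q ∈ pairs N, (‖x q.1 - x q.2‖ : ℂ) ^ β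
    ∂(Measure.pi fun _ => μ.restrict X)

/-- The multivariate canonical partition function
`𝒵_I(X, s) = ∫_{X^I} ∏_{i<j, i,j ∈ I} |x_i - x_j|^{s_{ij}} dμ^I` for a subset `I ⊆ [N]`. -/
def ZI (μ : Measure ℚ_[p]) [SigmaFinite μ] (X : Set ℚ_[p]) {N : ℕ} (I : Finset (Fin N))
    (s : Fin N → Fin N → ℂ) : ℂ :=
  ∫ x : I → ℚ_[p],
    ∏ q ∈ Finset.univ.filter (fun q : (↥I) × (↥I) => (q.1 : Fin N) < (q.2 : Fin N)),
      (‖x q.1 - x q.2‖ : ℂ) ^ s q.1.1 q.2.1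
    ∂(Measure.pi fun _ => μ.restrict X)

/-- The multivariate canonical partition function
`𝒵_N(ℙ¹(ℚ_p), s) = ∫_{(ℙ¹(ℚ_p))^N} ∏_{i<j} δ(ξ_i,ξ_j)^{s_{ij}} dν^N`. -/
def ZP1s (ν : Measure (P1 p)) [SigmaFinite ν] (N : ℕ) (s : Fin N → Fin N → ℂ) : ℂ :=
  ∫ x : Fin N → P1 p, ∏ q ∈ pairs N, ((pdelta p (x q.1) (x q.2) : ℝ) : ℂ) ^ s q.1 q.2
    ∂(Measure.pi fun _ => ν)

/-- The one-component canonical partition function `Z_N(ℙ¹(ℚ_p), β)`. -/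
def ZP1 (ν : Measure (P1 p)) [SigmaFinite ν] (N : ℕ) (β : ℂ) : ℂ :=
  ∫ x : Fin N → P1 p, ∏ q ∈ pairs N, ((pdelta p (x q.1) (x q.2) : ℝ) : ℂ) ^ β
    ∂(Measure.pi fun _ => ν)

/-! ### The quadratic recurrence -/

/-- The factor `ρ_{N,k}(t,β)` appearing in the quadratic recurrence; here
`N.choose 2 = N(N-1)/2`. -/
def rho (N k : ℕ) (t : ℝ) (β : ℂ) : ℂ :=
  if t = 0 then
    (((N : ℂ) + (N.choose 2 : ℂ) * β) * (1 - 2 * (k : ℂ) / (N : ℂ)) + 1) /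
      (((N : ℂ) + (N.choose 2 : ℂ) * β) - 1)
  else
    Complex.sinh (((t : ℂ) / 2) * (((N : ℂ) + (N.choose 2 : ℂ) * β) * (1 - 2 * (k : ℂ) / (N : ℂ)) + 1)) /
      Complex.sinh (((t : ℂ) / 2) * (((N : ℂ) + (N.choose 2 : ℂ) * β) - 1))

/-- The quadratic recurrence: `F 0 = F 1 = 1` and
`F N t β = ∑_{k=1}^{N-1} (k/N) ρ_{N,k}(t,β) F_{N-k}(t,β) F_k(t,β)` for `N ≥ 2`. -/
def F : ℕ → ℝ → ℂ → ℂ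
  | 0, _, _ => 1
  | 1, _, _ => 1
  | N + 2, t, β =>
    ∑ k ∈ (Finset.Icc 1 (N + 1)).attach,
      (((k : ℕ) : ℂ) / ((N : ℂ) + 2)) * rho (N + 2) k t β *
        F (N + 2 - (k : ℕ)) t β * F (k : ℕ) t β
  decreasing_by
  all_goals
    have hk := Finset.mem_Icc.mp k.2
    omega

/-! ### Splitting chains -/

/-- A splitting chain `Λ_0 > Λ_1 > ⋯ > Λ_L` of set partitions of the subset `I ⊆ [N]`,
beginning with the trivial partition `{I}` and ending with the partition of `I` into
singletons.  (The values `Λ ℓ` for `ℓ > L` are required to be `∅`, so that a chain is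
determined by the genuine data `Λ_0, …, Λ_L`.) -/
structure SplChain (N : ℕ) (I : Finset (Fin N)) where
  L : ℕ
  Λ : ℕ → Finset (Finset (Fin N))
  nonempty_mem : ∀ ℓ ≤ L, ∀ B ∈ Λ ℓ, B.Nonempty
  subset_mem : ∀ ℓ ≤ L, ∀ B ∈ Λ ℓ, B ⊆ I
  cover : ∀ ℓ ≤ L, ∀ i ∈ I, ∃! B, B ∈ Λ ℓ ∧ i ∈ B
  first : Λ 0 = {I}
  last : Λ L = I.image fun i => {i}
  refines : ∀ ℓ < L, ∀ B ∈ Λ (ℓ + 1), ∃ C ∈ Λ ℓ, B ⊆ C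
  strict : ∀ ℓ < L, Λ (ℓ + 1) ≠ Λ ℓ
  trailing : ∀ ℓ, L < ℓ → Λ ℓ = ∅

variable {N : ℕ} {I : Finset (Fin N)}

/-- The branches of a splitting chain: the non-singleton parts,
`ℬ(𝔖) = (Λ_0 ∪ ⋯ ∪ Λ_{L-1}) \ Λ_L`. -/
def SplChain.branches (S : SplChain N I) : Finset (Finset (Fin N)) :=
  ((Finset.range S.L).biUnion S.Λ) \ S.Λ S.L

/-- The depth `ℓ_𝔖(λ) = max {ℓ : λ ∈ Λ_ℓ}` of a branch. -/
def SplChain.depth (S : SplChain N I) (lam : Finset (Fin N)) : ℕ :=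
  ((Finset.range (S.L + 1)).filter fun ℓ => lam ∈ S.Λ ℓ).sup id

/-- The degree `deg_𝔖(λ) = #{λ' ∈ Λ_{ℓ_𝔖(λ)+1} : λ' ⊆ λ}` of a branch. -/
def SplChain.degree (S : SplChain N I) (lam : Finset (Fin N)) : ℕ :=
  ((S.Λ (S.depth lam + 1)).filter fun lam' => lam' ⊆ lam).card

/-- A splitting chain is reduced if every branch appears in exactly one partition of the
chain (namely the one at its depth). -/
def SplChain.Reduced (S : SplChain N I) : Prop :=
  ∀ lam ∈ S.branches, ∀ ℓ ≤ S.L, (lam ∈ S.Λ ℓ ↔ ℓ = S.depth lam)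

/-- `e_λ(s) = #λ - 1 + ∑_{i<j, i,j ∈ λ} s_{ij}`. -/
def eexp (lam : Finset (Fin N)) (s : Fin N → Fin N → ℂ) : ℂ :=
  (lam.card : ℂ) - 1 + ∑ q ∈ (pairs N).filter fun q => q.1 ∈ lam ∧ q.2 ∈ lam, s q.1 q.2

/-- Membership in `Ω_I`: `Re e_λ(s) > 0` for every `λ ⊆ I` with `#λ > 1`. -/
def InOmega (I : Finset (Fin N)) (s : Fin N → Fin N → ℂ) : Prop :=
  ∀ lam ⊆ I, 1 < lam.card → 0 < (eexp lam s).re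


/-- The multivariate canonical partition function `𝒵_N(ℤ_p, s)` over `Fin N`-indexed tuples. -/
def ZNs (μ : Measure ℚ_[p]) [SigmaFinite μ] (X : Set ℚ_[p]) (N : ℕ)
    (s : Fin N → Fin N → ℂ) : ℂ :=
  ∫ x : Fin N → ℚ_[p], ∏ q ∈ pairs N, (‖x q.1 - x q.2‖ : ℂ) ^ s q.1 q.2
    ∂(Measure.pi fun _ => μ.restrict X)

/-- The ball `p^v ℤ_p = {x : |x| ≤ p^{-v}}` in `ℚ_p`. -/
def pvball (v : ℤ) : Set ℚ_[p] := {x | ‖x‖ ≤ (p : ℝ) ^ (-v)}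

/-- `G_N(q,β) = N! q^{(1/2)(N choose 2)β} F_N(log q, β)`. -/
def GN (N : ℕ) (β : ℂ) (q : ℝ) : ℂ :=
  (N.factorial : ℂ) * (q : ℂ) ^ ((N.choose 2 : ℂ) * β / 2) * F N (Real.log q) β

/-- `H_N(q,β)`, the efficient formula for `Z_N(ℙ¹(K),β)` as a function of `q`. -/
def HN (N : ℕ) (β : ℂ) (q : ℝ) : ℂ :=
  (N.factorial : ℂ) * ∑ k ∈ Finset.range (N + 1),
    Complex.cosh (((Real.log q : ℂ) / 2) * ((N : ℂ) + (N.choose 2 : ℂ) * β) *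
          (1 - 2 * (k : ℂ) / (N : ℂ))) /
        (2 * Complex.cosh ((Real.log q : ℂ) / 2)) ^ N *
      F (N - k) (Real.log q) β * F k (Real.log q) β

end


/-! ### Auxiliary lemmas for statement_4 -/

open scoped ContDiff

private lemma sinh_ne_zero_of_re_ne {z : ℂ} (hz : z.re ≠ 0) : Complex.sinh z ≠ 0 := by
  intro h
  have hd : Complex.sinh z = (Complex.exp z - Complex.exp (-z)) / 2 := rfl
  rw [hd, div_eq_zero_iff, sub_eq_zero] at h
  rcases h with h | h
  · have h2 := congrArg norm h
    rw [Complex.norm_exp, Complex.norm_exp, Complex.neg_re, Real.exp_eq_exp] at h2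
    exact hz (by linarith)
  · norm_num at h

private lemma myDiv {f g : ℝ → ℂ} {n : WithTop ℕ∞} {x : ℝ} (hf : ContDiffAt ℝ n f x)
    (hg : ContDiffAt ℝ n g x) (hx : g x ≠ 0) :
    ContDiffAt ℝ n (fun x => f x / g x) x := by
  simpa only [div_eq_mul_inv, Pi.inv_apply] using hf.mul (hg.inv hx)

private lemma contDiffR_sinh : ContDiff ℝ ω Complex.sinh :=
  ContDiff.restrict_scalars (𝕜' := ℂ) ℝ Complex.contDiff_sinh

private lemma contDiffR_cosh : ContDiff ℝ ω Complex.cosh :=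
  ContDiff.restrict_scalars (𝕜' := ℂ) ℝ Complex.contDiff_cosh

private lemma contDiffR_exp : ContDiff ℝ ω Complex.exp :=
  ContDiff.restrict_scalars (𝕜' := ℂ) ℝ Complex.contDiff_exp

private lemma contDiff_sinh_ratio (a b : ℂ) (hb : 0 < b.re) :
    ContDiff ℝ ω (fun t : ℝ =>
      if t = 0 then a / b
      else Complex.sinh ((t : ℂ) / 2 * a) / Complex.sinh ((t : ℂ) / 2 * b)) := by
  have hb0 : b ≠ 0 := fun h => by simp [h] at hb
  set u : ℂ → ℂ := fun z => Complex.sinh (z / 2 * a) with hu'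
  set v : ℂ → ℂ := fun z => Complex.sinh (z / 2 * b) with hv'
  have hud : Differentiable ℂ u := Complex.differentiable_sinh.comp (by fun_prop)
  have hvd : Differentiable ℂ v := Complex.differentiable_sinh.comp (by fun_prop)
  have hu0 : u 0 = 0 := by simp [hu']
  have hv0 : v 0 = 0 := by simp [hv']
  have hderiv : ∀ c : ℂ, deriv (fun z : ℂ => Complex.sinh (z / 2 * c)) 0 = c / 2 := by
    intro c
    have h1 : HasDerivAt (fun z : ℂ => z / 2 * c) (1 / 2 * c) 0 := by
      simpa using ((hasDerivAt_id (0 : ℂ)).div_const 2).mul_const c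
    have h2 : HasDerivAt (fun z : ℂ => Complex.sinh (z / 2 * c))
        (Complex.cosh ((0 : ℂ) / 2 * c) * (1 / 2 * c)) 0 :=
      HasDerivAt.comp (0 : ℂ) (h₂ := Complex.sinh) (Complex.hasDerivAt_sinh _) h1
    rw [h2.deriv]
    simp only [zero_div, zero_mul, Complex.cosh_zero, one_mul]
    ring
  have hU : AnalyticAt ℂ (dslope u 0) 0 := by
    obtain ⟨p, hp⟩ := hud.analyticAt 0
    exact hp.has_fpower_series_dslope_fslope.analyticAt
  have hV : AnalyticAt ℂ (dslope v 0) 0 := by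
    obtain ⟨p, hp⟩ := hvd.analyticAt 0
    exact hp.has_fpower_series_dslope_fslope.analyticAt
  have hU0 : dslope u 0 0 = a / 2 := by rw [dslope_same]; exact hderiv a
  have hV0 : dslope v 0 0 = b / 2 := by rw [dslope_same]; exact hderiv b
  have hV0ne : dslope v 0 0 ≠ 0 := by rw [hV0]; exact div_ne_zero hb0 two_ne_zero
  have hΨ : AnalyticAt ℂ (fun z => dslope u 0 z / dslope v 0 z) 0 := hU.div hV hV0ne
  have hof : ContDiff ℝ ω (fun t : ℝ => (t : ℂ)) := Complex.ofRealCLM.contDiff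
  rw [contDiff_iff_contDiffAt]
  intro t
  rcases eq_or_ne t 0 with rfl | ht
  · -- smoothness at `0` via the dslope quotient
    have hcomp : ContDiffAt ℝ ω (fun t : ℝ => dslope u 0 (t : ℂ) / dslope v 0 (t : ℂ)) 0 := by
      have h0 : ContDiffAt ℝ ω (fun z : ℂ => dslope u 0 z / dslope v 0 z) (((0 : ℝ) : ℂ)) := by
        simpa using (hΨ.contDiffAt (n := ω)).restrict_scalars ℝ
      exact h0.comp 0 hof.contDiffAt
    apply hcomp.congr_of_eventuallyEq
    have hev : ∀ᶠ z : ℂ in nhds 0, dslope v 0 z ≠ 0 := hV.continuousAt.eventually_ne hV0ne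
    have hevR : ∀ᶠ s : ℝ in nhds 0, dslope v 0 (s : ℂ) ≠ 0 := by
      have hc : ContinuousAt (fun s : ℝ => (s : ℂ)) 0 := Complex.continuous_ofReal.continuousAt
      have h3 := hc.eventually (p := fun z => dslope v 0 z ≠ 0) (by simpa using hev)
      simpa using h3
    filter_upwards [hevR] with s hvs
    rcases eq_or_ne s 0 with rfl | hs
    · simp only [if_pos rfl, Complex.ofReal_zero, hU0, hV0]
      exact (div_div_div_cancel_right₀ two_ne_zero a b).symm
    · have hsC : (s : ℂ) ≠ 0 := by exact_mod_cast hs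
      rw [if_neg hs, dslope_of_ne _ hsC, dslope_of_ne _ hsC, slope_def_field, slope_def_field,
        hu0, hv0, sub_zero, sub_zero, sub_zero, div_div_div_cancel_right₀ hsC]
  · -- smoothness away from `0`
    have hne : ∀ s : ℝ, s ≠ 0 → Complex.sinh ((s : ℂ) / 2 * b) ≠ 0 := by
      intro s hs
      apply sinh_ne_zero_of_re_ne
      have hrw : ((s : ℂ) / 2 * b) = ((s / 2 : ℝ) : ℂ) * b := by push_cast; ring
      rw [hrw, Complex.re_ofReal_mul]
      exact mul_ne_zero (by simpa using hs) hb.ne'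
    have hinner : ∀ c : ℂ, ContDiffAt ℝ ω (fun s : ℝ => Complex.sinh ((s : ℂ) / 2 * c)) t := by
      intro c
      exact (contDiffR_sinh.contDiffAt).comp t
        (((hof.contDiffAt).div_const 2).mul (contDiffAt_const (c := c)))
    have hg : ContDiffAt ℝ ω
        (fun s : ℝ => Complex.sinh ((s : ℂ) / 2 * a) / Complex.sinh ((s : ℂ) / 2 * b)) t :=
      myDiv (hinner a) (hinner b) (hne t ht)
    apply hg.congr_of_eventuallyEq
    filter_upwards [eventually_ne_nhds ht] with s hs
    rw [if_neg hs]

private lemma contDiff_rho (M k : ℕ) (β : ℂ)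
    (hb : 0 < (((M : ℂ) + (M.choose 2 : ℂ) * β) - 1).re) :
    ContDiff ℝ ω fun t => rho M k t β := by
  have h := contDiff_sinh_ratio
    (((M : ℂ) + (M.choose 2 : ℂ) * β) * (1 - 2 * (k : ℂ) / (M : ℂ)) + 1)
    (((M : ℂ) + (M.choose 2 : ℂ) * β) - 1) hb
  simpa only [rho] using h

private lemma re_b_pos {N : ℕ} (β : ℂ) (hβ : -2 / (N : ℝ) < β.re)
    {M : ℕ} (h2 : 2 ≤ M) (hMN : M ≤ N) :
    0 < (((M : ℂ) + (M.choose 2 : ℂ) * β) - 1).re := by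
  have hre : (((M : ℂ) + (M.choose 2 : ℂ) * β) - 1).re
      = (M : ℝ) - 1 + (M.choose 2 : ℝ) * β.re := by
    simp [Complex.sub_re, Complex.add_re, Complex.mul_re]
    ring
  rw [hre]
  have hCnat : 2 * M.choose 2 = M * (M - 1) := by
    rw [Nat.choose_two_right, Nat.mul_div_cancel' (Nat.even_mul_pred_self M).two_dvd]
  have hC : 2 * ((M.choose 2 : ℕ) : ℝ) = (M : ℝ) * ((M : ℝ) - 1) := by
    have := congrArg (fun n : ℕ => (n : ℝ)) hCnat
    push_cast [Nat.cast_sub (by omega : 1 ≤ M)] at this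
    linarith
  have hN0 : (0 : ℝ) < (N : ℝ) := by
    have : 0 < N := by omega
    exact_mod_cast this
  have hCpos : (0 : ℝ) < ((M.choose 2 : ℕ) : ℝ) := by
    have : 0 < M.choose 2 := Nat.choose_pos (by omega)
    exact_mod_cast this
  have hβN : (-2 : ℝ) < β.re * (N : ℝ) := by
    have := mul_lt_mul_of_pos_right hβ hN0
    rwa [div_mul_cancel₀ _ hN0.ne'] at this
  have h3 : ((M.choose 2 : ℕ) : ℝ) * (-2) < ((M.choose 2 : ℕ) : ℝ) * (β.re * (N : ℝ)) :=
    mul_lt_mul_of_pos_left hβN hCpos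
  have hM1 : (1 : ℝ) ≤ (M : ℝ) := by
    have : 1 ≤ M := by omega
    exact_mod_cast this
  have hMN' : (M : ℝ) ≤ (N : ℝ) := by exact_mod_cast hMN
  have hprod : (0 : ℝ) ≤ ((M : ℝ) - 1) * ((N : ℝ) - (M : ℝ)) :=
    mul_nonneg (by linarith) (by linarith)
  nlinarith [h3, hC, hprod, hN0]

private lemma rho_neg (M k : ℕ) (t : ℝ) (β : ℂ) : rho M k (-t) β = rho M k t β := by
  unfold rho
  rcases eq_or_ne t 0 with rfl | ht
  · norm_num
  · rw [if_neg (neg_ne_zero.mpr ht), if_neg ht, Complex.ofReal_neg,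
      show -(t : ℂ) / 2 = -((t : ℂ) / 2) by ring, neg_mul, neg_mul,
      Complex.sinh_neg, Complex.sinh_neg, neg_div_neg_eq]

private lemma F_neg (β : ℂ) : ∀ (M : ℕ) (t : ℝ), F M (-t) β = F M t β := by
  intro M
  induction M using Nat.strong_induction_on with
  | _ M ih =>
    intro t
    match M, ih with
    | 0, _ => simp [F]
    | 1, _ => simp [F]
    | (n + 2), ih =>
      rw [F, F]
      refine Finset.sum_congr rfl fun k _ => ?_
      have hk := Finset.mem_Icc.mp k.2
      rw [rho_neg, ih _ (by omega) t, ih _ (by omega) t]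

private lemma contDiff_F {N : ℕ} (β : ℂ) (hβ : -2 / (N : ℝ) < β.re) :
    ∀ M, M ≤ N → ContDiff ℝ ω fun t => F M t β := by
  intro M
  induction M using Nat.strong_induction_on with
  | _ M ih =>
    intro hMN
    match M, ih, hMN with
    | 0, _, _ =>
      have h0 : (fun t : ℝ => F 0 t β) = fun _ => (1 : ℂ) := funext fun t => by simp [F]
      rw [h0]; exact contDiff_const
    | 1, _, _ =>
      have h0 : (fun t : ℝ => F 1 t β) = fun _ => (1 : ℂ) := funext fun t => by simp [F]
      rw [h0]; exact contDiff_const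
    | (n + 2), ih, hMN =>
      have h0 : (fun t : ℝ => F (n + 2) t β) = fun t : ℝ =>
          ∑ k ∈ (Finset.Icc 1 (n + 1)).attach,
            (((k : ℕ) : ℂ) / ((n : ℂ) + 2)) * rho (n + 2) k t β *
              F (n + 2 - (k : ℕ)) t β * F (k : ℕ) t β := funext fun t => by rw [F]
      rw [h0]
      apply ContDiff.sum
      intro k _
      have hk := Finset.mem_Icc.mp k.2
      exact (((contDiff_const (c := ((k : ℕ) : ℂ) / ((n : ℂ) + 2))).mul (contDiff_rho (n + 2) k β
          (re_b_pos β hβ (by omega) hMN))).mul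
        (ih _ (by omega) (by omega))).mul (ih _ (by omega) (by omega))

private lemma contDiffAt_real_cpow (w : ℂ) {q : ℝ} (hq : 0 < q) :
    ContDiffAt ℝ ω (fun x : ℝ => (x : ℂ) ^ w) q := by
  have hof : ContDiff ℝ ω (fun t : ℝ => (t : ℂ)) := Complex.ofRealCLM.contDiff
  have hlog : ContDiffAt ℝ ω Real.log q := Real.contDiffAt_log.mpr hq.ne'
  have h1 : ContDiffAt ℝ ω (fun x : ℝ => Complex.exp ((Real.log x : ℂ) * w)) q := by
    apply (contDiffR_exp.contDiffAt).comp
    exact ((hof.contDiffAt).comp q hlog).mul contDiffAt_const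
  apply h1.congr_of_eventuallyEq
  filter_upwards [eventually_gt_nhds hq] with x hx
  rw [Complex.cpow_def_of_ne_zero (by exact_mod_cast hx.ne' : (x : ℂ) ≠ 0),
    ← Complex.ofReal_log hx.le]

private lemma cosh_half_ne_zero (t : ℝ) : Complex.cosh ((t : ℂ) / 2) ≠ 0 := by
  have hrw : ((t : ℂ) / 2) = ((t / 2 : ℝ) : ℂ) := by push_cast; ring
  rw [hrw, ← Complex.ofReal_cosh]
  exact_mod_cast (Real.cosh_pos (x := t / 2)).ne'

theorem statement_4 (N : ℕ) (hN : 2 ≤ N) (β : ℂ) (hβ : -2 / (N : ℝ) < β.re) :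
    ContDiffOn ℝ (⊤ : ℕ∞) (fun q : ℝ => GN N β q) (Set.Ioi 0) ∧
    ContDiffOn ℝ (⊤ : ℕ∞) (fun q : ℝ => HN N β q) (Set.Ioi 0) ∧
    (∀ q : ℝ, 0 < q →
      GN N β q⁻¹ = (q : ℂ) ^ (-((N.choose 2 : ℂ) * β)) * GN N β q) ∧
    (∀ q : ℝ, 0 < q → HN N β q⁻¹ = HN N β q) := by
  have hof : ContDiff ℝ ω (fun t : ℝ => (t : ℂ)) := Complex.ofRealCLM.contDiff
  have hFs : ∀ M, M ≤ N → ContDiff ℝ ω fun t => F M t β := contDiff_F β hβ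
  refine ⟨?_, ?_, ?_, ?_⟩
  · -- smoothness of GN
    intro q hq
    have hq : (0 : ℝ) < q := hq
    apply ContDiffAt.contDiffWithinAt
    have hF : ContDiffAt ℝ ω (fun x : ℝ => F N (Real.log x) β) q :=
      ((hFs N le_rfl).contDiffAt).comp q (Real.contDiffAt_log.mpr hq.ne')
    have h := ((contDiffAt_const (c := (N.factorial : ℂ))).mul
      (contDiffAt_real_cpow ((N.choose 2 : ℂ) * β / 2) hq)).mul hF
    exact (h.of_le le_top).congr_of_eventuallyEq (by filter_upwards with x; rfl)
  · -- smoothness of HN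
    intro q hq
    have hq : (0 : ℝ) < q := hq
    apply ContDiffAt.contDiffWithinAt
    have hlog : ContDiffAt ℝ ω Real.log q := Real.contDiffAt_log.mpr hq.ne'
    have hloghalf : ContDiffAt ℝ ω (fun x : ℝ => ((Real.log x : ℂ)) / 2) q :=
      ((hof.contDiffAt).comp q hlog).div_const 2
    have hsum : ContDiffAt ℝ ω (fun x : ℝ => ∑ k ∈ Finset.range (N + 1),
        Complex.cosh (((Real.log x : ℂ)) / 2 * ((N : ℂ) + (N.choose 2 : ℂ) * β) *
            (1 - 2 * (k : ℂ) / (N : ℂ))) /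
          (2 * Complex.cosh (((Real.log x : ℂ)) / 2)) ^ N *
        F (N - k) (Real.log x) β * F k (Real.log x) β) q := by
      apply ContDiffAt.sum
      intro k hk
      have hnum : ContDiffAt ℝ ω (fun x : ℝ =>
          Complex.cosh (((Real.log x : ℂ)) / 2 * ((N : ℂ) + (N.choose 2 : ℂ) * β) *
            (1 - 2 * (k : ℂ) / (N : ℂ)))) q :=
        (contDiffR_cosh.contDiffAt).comp q
          ((hloghalf.mul (contDiffAt_const (c := (N : ℂ) + (N.choose 2 : ℂ) * β))).mul
          (contDiffAt_const (c := 1 - 2 * (k : ℂ) / (N : ℂ))))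
      have hden : ContDiffAt ℝ ω (fun x : ℝ =>
          (2 * Complex.cosh (((Real.log x : ℂ)) / 2)) ^ N) q :=
        ((contDiffAt_const (c := (2 : ℂ))).mul
          ((contDiffR_cosh.contDiffAt).comp q hloghalf)).pow N
      have hdne : (2 * Complex.cosh (((Real.log q : ℂ)) / 2)) ^ N ≠ 0 :=
        pow_ne_zero _ (mul_ne_zero two_ne_zero (cosh_half_ne_zero _))
      have hF1 : ContDiffAt ℝ ω (fun x : ℝ => F (N - k) (Real.log x) β) q :=
        ((hFs (N - k) (Nat.sub_le N k)).contDiffAt).comp q hlog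
      have hF2 : ContDiffAt ℝ ω (fun x : ℝ => F k (Real.log x) β) q :=
        ((hFs k (Nat.lt_succ_iff.mp (Finset.mem_range.mp hk))).contDiffAt).comp q hlog
      exact ((myDiv hnum hden hdne).mul hF1).mul hF2
    have h := (contDiffAt_const (c := (N.factorial : ℂ))).mul hsum
    exact (h.of_le le_top).congr_of_eventuallyEq (by filter_upwards with x; rfl)
  · -- functional equation for GN
    intro q hq
    have hq0 : (q : ℂ) ≠ 0 := by exact_mod_cast hq.ne'
    have harg : Complex.arg (q : ℂ) ≠ Real.pi := by
      rw [Complex.arg_ofReal_of_nonneg hq.le]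
      exact Real.pi_ne_zero.symm
    have hkey : (q : ℂ) ^ (-((N.choose 2 : ℂ) * β)) * (q : ℂ) ^ ((N.choose 2 : ℂ) * β / 2)
        = (q : ℂ) ^ (-((N.choose 2 : ℂ) * β / 2)) := by
      rw [← Complex.cpow_add _ _ hq0]
      congr 1
      ring
    simp only [GN, Real.log_inv, F_neg]
    rw [Complex.ofReal_inv, Complex.inv_cpow _ _ harg, ← Complex.cpow_neg]
    linear_combination ((N.factorial : ℂ) * F N (Real.log q) β) * hkey.symm
  · -- functional equation for HN
    intro q hq
    simp only [HN, Real.log_inv, Complex.ofReal_neg, neg_div, neg_mul, Complex.cosh_neg, F_neg]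


end LogCoulomb
end

section
/- (Quadratic Recurrence, part (a).) For every integer N ≥ 2 and every fixed t ∈ ℝ, the recurrence defining F_N(t,β) is well-defined for all β ∈ ℂ with Re(β) > −2/N (in particular, for t ≠ 0 the denominator sinh((t/2)[(N + (N(N−1)/2)β) − 1]) is nonzero, and for t = 0 the denominator (N + (N(N−1)/2)β) − 1 is nonzero), and the function β ↦ F_N(t,β) is holomorphic on the half-plane {β ∈ ℂ : Re(β) > −2/N}. -/
open MeasureTheory
open scoped LinearAlgebra.Projectivization

/-! On `Re β > -2/M` the denominator `M + C(M,2) β - 1` has real part `(M-1)(1 + M Re β / 2) > 0`.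
Since `sinh` vanishes only on the imaginary axis, neither form of the denominator of `ρ_{M,k}`
vanishes there. The half-planes shrink as `M` grows, so a strong induction on `M` through the
recurrence gives holomorphy of every `F_M` on its half-plane. -/

theorem Complex.re_eq_zero_of_sinh_eq_zero {z : ℂ} (hz : Complex.sinh z = 0) : z.re = 0 := by
  have hsin : Complex.sin (z * Complex.I) = 0 := by rw [Complex.sin_mul_I, hz, zero_mul]
  obtain ⟨k, hk⟩ := Complex.sin_eq_zero_iff.mp hsin
  simpa using congrArg Complex.im hk

namespace LogCoulomb

def halfPlane (N : ℕ) : Set ℂ := {β : ℂ | -2 / (N : ℝ) < β.re}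

theorem halfPlane_mono {k M : ℕ} (hk : 0 < k) (hkM : k ≤ M) : halfPlane M ⊆ halfPlane k :=
  fun β (hβ : -2 / (M : ℝ) < β.re) =>
    show -2 / (k : ℝ) < β.re from lt_of_le_of_lt (by
      rw [neg_div, neg_div, neg_le_neg_iff]
      exact div_le_div_of_nonneg_left zero_le_two (by exact_mod_cast hk) (by exact_mod_cast hkM)) hβ

theorem re_denominator_pos {M : ℕ} (hM : 2 ≤ M) {β : ℂ} (hβ : β ∈ halfPlane M) :
    0 < (((M : ℂ) + (M.choose 2 : ℂ) * β) - 1).re := by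
  have hβ' : -2 / (M : ℝ) < β.re := hβ
  have hM' : (2 : ℝ) ≤ M := by exact_mod_cast hM
  have hre : (((M : ℂ) + (M.choose 2 : ℂ) * β) - 1).re = ((M : ℝ) - 1) * (1 + M * β.re / 2) := by
    simp only [Complex.sub_re, Complex.add_re, Complex.mul_re, Complex.natCast_re,
      Complex.natCast_im, Complex.one_re, zero_mul, sub_zero]
    rw [Nat.cast_choose_two]
    ring
  rw [div_lt_iff₀ (by positivity)] at hβ'
  rw [hre]
  apply mul_pos <;> nlinarith

theorem denominator_ne_zero {M : ℕ} (hM : 2 ≤ M) {β : ℂ} (hβ : β ∈ halfPlane M) :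
    ((M : ℂ) + (M.choose 2 : ℂ) * β) - 1 ≠ 0 := fun h =>
  (re_denominator_pos hM hβ).ne' (by rw [h, Complex.zero_re])

theorem sinh_denominator_ne_zero {M : ℕ} (hM : 2 ≤ M) {β : ℂ} (hβ : β ∈ halfPlane M)
    {t : ℝ} (ht : t ≠ 0) :
    Complex.sinh (((t : ℂ) / 2) * (((M : ℂ) + (M.choose 2 : ℂ) * β) - 1)) ≠ 0 := fun h => by
  have hre := Complex.re_eq_zero_of_sinh_eq_zero h
  rw [show (t : ℂ) / 2 = ((t / 2 : ℝ) : ℂ) by push_cast; rfl, Complex.re_ofReal_mul] at hre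
  exact mul_ne_zero (div_ne_zero ht two_ne_zero) (re_denominator_pos hM hβ).ne' hre

theorem differentiableOn_rho {M : ℕ} (hM : 2 ≤ M) (k : ℕ) (t : ℝ) :
    DifferentiableOn ℂ (rho M k t) (halfPlane M) := by
  unfold rho
  split_ifs with ht
  · exact (by fun_prop : Differentiable ℂ _).differentiableOn.div (by fun_prop)
      fun β hβ => denominator_ne_zero hM hβ
  · exact (by fun_prop : Differentiable ℂ _).differentiableOn.div
      (by fun_prop : Differentiable ℂ _).differentiableOn
      fun β hβ => sinh_denominator_ne_zero hM hβ ht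

theorem differentiableOn_F (M : ℕ) (t : ℝ) : DifferentiableOn ℂ (F M t) (halfPlane M) := by
  induction M using Nat.strong_induction_on with
  | _ M ih =>
    match M with
    | 0 | 1 => exact (differentiableOn_const 1).congr fun β _ => by rw [F]
    | m + 2 =>
      have hF : F (m + 2) t = fun β => ∑ k ∈ (Finset.Icc 1 (m + 1)).attach,
          (((k : ℕ) : ℂ) / ((m : ℂ) + 2)) * rho (m + 2) k t β *
            F (m + 2 - (k : ℕ)) t β * F (k : ℕ) t β := by
        funext β; rw [F]
      rw [hF]
      refine DifferentiableOn.fun_sum fun k _ => ?_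
      have hk := Finset.mem_Icc.mp k.2
      exact (((differentiableOn_const _).mul (differentiableOn_rho (by omega) k t)).mul
        ((ih _ (by omega)).mono (halfPlane_mono (by omega) (by omega)))).mul
        ((ih _ (by omega)).mono (halfPlane_mono (by omega) (by omega)))

theorem statement_5_general (N : ℕ) (t : ℝ) :
    (∀ M : ℕ, 2 ≤ M → M ≤ N → ∀ β : ℂ, -2 / (N : ℝ) < β.re →
      (t ≠ 0 →
        Complex.sinh (((t : ℂ) / 2) * (((M : ℂ) + (M.choose 2 : ℂ) * β) - 1)) ≠ 0) ∧
      (t = 0 → ((M : ℂ) + (M.choose 2 : ℂ) * β) - 1 ≠ 0)) ∧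
    DifferentiableOn ℂ (fun β : ℂ => F N t β) {β : ℂ | -2 / (N : ℝ) < β.re} := by
  refine ⟨fun M hM hMN β hβ => ?_, differentiableOn_F N t⟩
  have hβM : β ∈ halfPlane M := halfPlane_mono (by omega) hMN hβ
  exact ⟨fun ht => sinh_denominator_ne_zero hM hβM ht, fun _ => denominator_ne_zero hM hβM⟩

theorem statement_5 (N : ℕ) (hN : 2 ≤ N) (t : ℝ) :
    (∀ M : ℕ, 2 ≤ M → M ≤ N → ∀ β : ℂ, -2 / (N : ℝ) < β.re →
      (t ≠ 0 →
        Complex.sinh (((t : ℂ) / 2) * (((M : ℂ) + (M.choose 2 : ℂ) * β) - 1)) ≠ 0) ∧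
      (t = 0 → ((M : ℂ) + (M.choose 2 : ℂ) * β) - 1 ≠ 0)) ∧
    DifferentiableOn ℂ (fun β : ℂ => F N t β) {β : ℂ | -2 / (N : ℝ) < β.re} :=
  statement_5_general N t

end LogCoulomb
end

section
/- For every prime p, every point ξ ∈ ℙ¹(ℚ_p), and every integer v ≥ 1, the closed ball B_v(ξ) := {η ∈ ℙ¹(ℚ_p) : δ(ξ,η) ≤ p^{−v}} satisfies ν(B_v(ξ)) = p^{−v} · p/(p+1). In particular, ν({[x:1] : x ∈ ℤ_p}) = p/(p+1). -/
open MeasureTheory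
open scoped LinearAlgebra.Projectivization

namespace Matrix

variable {K : Type*}

theorem norm_mulVec_le_of_forall_norm_le_one [NormedRing K] [IsUltrametricDist K]
    {m n : Type*} [Fintype m] [Fintype n] {A : Matrix m n K} (hA : ∀ i j, ‖A i j‖ ≤ 1)
    (x : n → K) : ‖A *ᵥ x‖ ≤ ‖x‖ :=
  (pi_norm_le_iff_of_nonneg (norm_nonneg x)).mpr fun i =>
    IsUltrametricDist.norm_sum_le_of_forall_le_of_nonneg (norm_nonneg x) fun j _ =>
      (norm_mul_le _ _).trans <|
        (mul_le_of_le_one_left (norm_nonneg _) (hA i j)).trans (norm_le_pi_norm x j)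

theorem norm_mulVec_eq_of_norm_det_eq_one [NormedField K] [IsUltrametricDist K]
    {A : Matrix (Fin 2) (Fin 2) K} (hA : ∀ i j, ‖A i j‖ ≤ 1) (hdet : ‖A.det‖ = 1)
    (x : Fin 2 → K) : ‖A *ᵥ x‖ = ‖x‖ := by
  have hadj : ∀ i j, ‖A.adjugate i j‖ ≤ 1 := by
    rw [adjugate_fin_two]
    intro i j
    fin_cases i <;> fin_cases j <;> simp [hA]
  refine le_antisymm (norm_mulVec_le_of_forall_norm_le_one hA x) ?_
  calc ‖x‖ = ‖A.det • x‖ := by rw [norm_smul, hdet, one_mul]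
    _ = ‖A.adjugate *ᵥ A *ᵥ x‖ := by
      rw [mulVec_mulVec, adjugate_mul, smul_mulVec, one_mulVec]
    _ ≤ ‖A *ᵥ x‖ := norm_mulVec_le_of_forall_norm_le_one hadj _

theorem mulVec_cross_fin_two [CommRing K] (A : Matrix (Fin 2) (Fin 2) K) (x y : Fin 2 → K) :
    (A *ᵥ x) 0 * (A *ᵥ y) 1 - (A *ᵥ x) 1 * (A *ᵥ y) 0 =
      A.det * (x 0 * y 1 - x 1 * y 0) := by
  simp only [mulVec, dotProduct, Fin.sum_univ_two, det_fin_two]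
  ring

end Matrix

namespace LogCoulomb

open Matrix Projectivization

variable {p : ℕ} [Fact p.Prime]

variable (p) in
def GL2Zp : Set (Matrix (Fin 2) (Fin 2) ℚ_[p]) :=
  {A | (∀ i j, ‖A i j‖ ≤ 1) ∧ ‖A.det‖ = 1}

theorem adjugate_mem_GL2Zp {A : Matrix (Fin 2) (Fin 2) ℚ_[p]} (hA : A ∈ GL2Zp p) :
    A.adjugate ∈ GL2Zp p := by
  refine ⟨?_, by simpa [det_adjugate] using hA.2⟩
  rw [adjugate_fin_two]
  intro i j
  fin_cases i <;> fin_cases j <;> simp [hA.1]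

theorem norm_mulVec_of_mem_GL2Zp {A : Matrix (Fin 2) (Fin 2) ℚ_[p]} (hA : A ∈ GL2Zp p)
    (x : Fin 2 → ℚ_[p]) : ‖A *ᵥ x‖ = ‖x‖ :=
  norm_mulVec_eq_of_norm_det_eq_one hA.1 hA.2 x

theorem mulVec_ne_zero_of_mem_GL2Zp {A : Matrix (Fin 2) (Fin 2) ℚ_[p]} (hA : A ∈ GL2Zp p)
    {x : Fin 2 → ℚ_[p]} (hx : x ≠ 0) : A *ᵥ x ≠ 0 := by
  rw [← norm_ne_zero_iff, norm_mulVec_of_mem_GL2Zp hA, norm_ne_zero_iff]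
  exact hx

theorem sdelta_eq_div_norm_mul_norm (x y : Fin 2 → ℚ_[p]) :
    sdelta p x y = ‖x 0 * y 1 - x 1 * y 0‖ / (‖x‖ * ‖y‖) := by
  simp [sdelta, Pi.norm_def, Fin.univ_succ]

theorem sdelta_comm (x y : Fin 2 → ℚ_[p]) : sdelta p x y = sdelta p y x := by
  rw [sdelta_eq_div_norm_mul_norm, sdelta_eq_div_norm_mul_norm, norm_sub_rev, mul_comm (y 0),
    mul_comm (y 1), mul_comm ‖y‖]

theorem sdelta_smul (a b : ℚ_[p]) (ha : a ≠ 0) (hb : b ≠ 0) (x y : Fin 2 → ℚ_[p]) :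
    sdelta p (a • x) (b • y) = sdelta p x y := by
  simp only [sdelta_eq_div_norm_mul_norm, Pi.smul_apply, smul_eq_mul, norm_smul]
  rw [show a * x 0 * (b * y 1) - a * x 1 * (b * y 0) = a * b * (x 0 * y 1 - x 1 * y 0) by ring,
    norm_mul, norm_mul, mul_mul_mul_comm ‖a‖,
    mul_div_mul_left _ _ (mul_ne_zero (norm_ne_zero_iff.mpr ha) (norm_ne_zero_iff.mpr hb))]

theorem sdelta_mulVec {A : Matrix (Fin 2) (Fin 2) ℚ_[p]} (hA : A ∈ GL2Zp p)
    (x y : Fin 2 → ℚ_[p]) : sdelta p (A *ᵥ x) (A *ᵥ y) = sdelta p x y := by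
  rw [sdelta_eq_div_norm_mul_norm, sdelta_eq_div_norm_mul_norm, mulVec_cross_fin_two, norm_mul,
    hA.2, one_mul, norm_mulVec_of_mem_GL2Zp hA, norm_mulVec_of_mem_GL2Zp hA]

theorem pdelta_mk {x y : Fin 2 → ℚ_[p]} (hx : x ≠ 0) (hy : y ≠ 0) :
    pdelta p (mk ℚ_[p] x hx) (mk ℚ_[p] y hy) = sdelta p x y := by
  obtain ⟨a, ha⟩ := exists_smul_eq_mk_rep ℚ_[p] x hx
  obtain ⟨b, hb⟩ := exists_smul_eq_mk_rep ℚ_[p] y hy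
  rw [pdelta, ← ha, ← hb, Units.smul_def, Units.smul_def]
  exact sdelta_smul _ _ a.ne_zero b.ne_zero x y

theorem pdelta_comm (ξ η : P1 p) : pdelta p ξ η = pdelta p η ξ :=
  sdelta_comm _ _

theorem mobius_mk {A : Matrix (Fin 2) (Fin 2) ℚ_[p]} (hA : A ∈ GL2Zp p)
    {x : Fin 2 → ℚ_[p]} (hx : x ≠ 0) :
    mobius p A (mk ℚ_[p] x hx) = mk ℚ_[p] (A *ᵥ x) (mulVec_ne_zero_of_mem_GL2Zp hA hx) := by
  obtain ⟨a, ha⟩ := exists_smul_eq_mk_rep ℚ_[p] x hx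
  rw [mobius, dif_pos (mulVec_ne_zero_of_mem_GL2Zp hA (rep_nonzero _)), mk_eq_mk_iff]
  exact ⟨a, by rw [← ha, Units.smul_def, Units.smul_def, mulVec_smul]⟩

theorem pdelta_mobius {A : Matrix (Fin 2) (Fin 2) ℚ_[p]} (hA : A ∈ GL2Zp p) (ξ η : P1 p) :
    pdelta p (mobius p A ξ) (mobius p A η) = pdelta p ξ η := by
  induction ξ using Projectivization.ind with | h x hx =>
  induction η using Projectivization.ind with | h y hy =>
  rw [mobius_mk hA hx, mobius_mk hA hy, pdelta_mk, pdelta_mk, sdelta_mulVec hA]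

theorem mobius_mobius_of_mul_eq_smul_one {A B : Matrix (Fin 2) (Fin 2) ℚ_[p]}
    (hA : A ∈ GL2Zp p) (hB : B ∈ GL2Zp p) {c : ℚ_[p]} (hc : c ≠ 0) (hBA : B * A = c • 1)
    (ξ : P1 p) : mobius p B (mobius p A ξ) = ξ := by
  induction ξ using Projectivization.ind with | h x hx =>
  rw [mobius_mk hA hx, mobius_mk hB, mk_eq_mk_iff]
  exact ⟨Units.mk0 c hc, by rw [mulVec_mulVec, hBA, smul_mulVec, one_mulVec, Units.smul_mk0]⟩

variable (p) in
def closedBall (ξ : P1 p) (r : ℝ) : Set (P1 p) := {η | pdelta p ξ η ≤ r}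

theorem image_mobius_closedBall {A : Matrix (Fin 2) (Fin 2) ℚ_[p]} (hA : A ∈ GL2Zp p)
    (ξ : P1 p) (r : ℝ) : mobius p A '' closedBall p ξ r = closedBall p (mobius p A ξ) r := by
  have hdet : A.det ≠ 0 := norm_ne_zero_iff.mp (by rw [hA.2]; exact one_ne_zero)
  have hadj := adjugate_mem_GL2Zp hA
  have hleft := mobius_mobius_of_mul_eq_smul_one hA hadj hdet (adjugate_mul A)
  have hright := mobius_mobius_of_mul_eq_smul_one hadj hA hdet (mul_adjugate A)
  rw [Set.image_eq_preimage_of_inverse hleft hright]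
  ext η
  simp only [closedBall, Set.mem_preimage, Set.mem_ofPred_eq]
  rw [← pdelta_mobius hA, hright]

theorem continuous_pdelta (ξ : P1 p) : Continuous (pdelta p ξ) := by
  let _ := projectivizationSetoid ℚ_[p] (Fin 2 → ℚ_[p])
  refine isQuotientMap_quotient_mk'.continuous_iff.mpr ?_
  have hw : Continuous fun w : {v : Fin 2 → ℚ_[p] // v ≠ 0} => w.1 := continuous_subtype_val
  have hcoord (i : Fin 2) := (continuous_apply i).comp hw
  have hcont : Continuous fun w : {v : Fin 2 → ℚ_[p] // v ≠ 0} =>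
      ‖ξ.rep 0 * w.1 1 - ξ.rep 1 * w.1 0‖ / (‖ξ.rep‖ * ‖w.1‖) :=
    Continuous.div ((continuous_const.mul (hcoord 1)).sub (continuous_const.mul (hcoord 0))).norm
      (continuous_const.mul hw.norm) fun w =>
      mul_ne_zero (norm_ne_zero_iff.mpr ξ.rep_nonzero) (norm_ne_zero_iff.mpr w.2)
  refine hcont.congr fun w => ?_
  change _ = pdelta p ξ (mk ℚ_[p] w.1 w.2)
  conv_rhs => rw [← mk_rep ξ]
  rw [pdelta_mk, sdelta_eq_div_norm_mul_norm]

theorem measurableSet_closedBall (ξ : P1 p) (r : ℝ) : MeasurableSet (closedBall p ξ r) :=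
  (isClosed_le (continuous_pdelta ξ) continuous_const).measurableSet

variable (p) in
noncomputable def iotaInfty (y : ℚ_[p]) : P1 p :=
  mk ℚ_[p] ![1, y] fun h => by simpa using congrFun h 0

theorem pdelta_iota_iota {x y : ℚ_[p]} (hx : ‖x‖ ≤ 1) (hy : ‖y‖ ≤ 1) :
    pdelta p (iota p x) (iota p y) = ‖x - y‖ := by
  rw [iota, iota, pdelta_mk, sdelta]
  simp [max_eq_right hx, max_eq_right hy]

theorem pdelta_iotaInfty_iotaInfty {x y : ℚ_[p]} (hx : ‖x‖ ≤ 1) (hy : ‖y‖ ≤ 1) :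
    pdelta p (iotaInfty p x) (iotaInfty p y) = ‖x - y‖ := by
  rw [iotaInfty, iotaInfty, pdelta_mk, sdelta]
  simp [max_eq_left hx, max_eq_left hy, norm_sub_rev]

theorem pdelta_iota_iotaInfty {x y : ℚ_[p]} (hx : ‖x‖ ≤ 1) (hy : ‖y‖ < 1) :
    pdelta p (iota p x) (iotaInfty p y) = 1 := by
  have hxy : ‖x * y‖ < 1 := by
    rw [norm_mul]
    nlinarith [norm_nonneg x, norm_nonneg y]
  rw [iota, iotaInfty, pdelta_mk, sdelta]
  simp only [Matrix.cons_val_zero, Matrix.cons_val_one, norm_one, max_eq_right hx,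
    max_eq_left hy.le, mul_one, div_one]
  rw [sub_eq_add_neg, IsUltrametricDist.norm_add_eq_max_of_norm_ne_norm (by simpa using hxy.ne),
    norm_neg, norm_one, max_eq_right hxy.le]

theorem iota_or_iotaInfty (ξ : P1 p) :
    (∃ x : ℚ_[p], ‖x‖ ≤ 1 ∧ ξ = iota p x) ∨
      ∃ y : ℚ_[p], ‖y‖ < 1 ∧ ξ = iotaInfty p y := by
  induction ξ using Projectivization.ind with | h w hw =>
  rcases le_or_gt ‖w 0‖ ‖w 1‖ with h01 | h10
  · have hw1 : w 1 ≠ 0 := fun h1 => hw <| by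
      ext i; fin_cases i <;> simp_all
    refine Or.inl ⟨w 0 / w 1, by rwa [norm_div, div_le_one (norm_pos_iff.mpr hw1)], ?_⟩
    rw [iota, mk_eq_mk_iff]
    refine ⟨Units.mk0 (w 1) hw1, ?_⟩
    ext i; fin_cases i <;> simp [Units.smul_def, mul_div_cancel₀ _ hw1]
  · have hw0 : w 0 ≠ 0 := fun h0 => by simp [h0] at h10; exact (norm_nonneg _).not_gt h10
    refine Or.inr ⟨w 1 / w 0, by rwa [norm_div, div_lt_one (norm_pos_iff.mpr hw0)], ?_⟩
    rw [iotaInfty, mk_eq_mk_iff]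
    refine ⟨Units.mk0 (w 0) hw0, ?_⟩
    ext i; fin_cases i <;> simp [Units.smul_def, mul_div_cancel₀ _ hw0]

theorem exists_mem_GL2Zp_mobius_iota_zero (ξ : P1 p) :
    ∃ A ∈ GL2Zp p, mobius p A (iota p 0) = ξ := by
  rcases iota_or_iotaInfty ξ with ⟨x, hx, rfl⟩ | ⟨y, hy, rfl⟩
  · have hA : !![1, x; 0, 1] ∈ GL2Zp p :=
      ⟨fun i j => by fin_cases i <;> fin_cases j <;> simp [hx], by simp [det_fin_two]⟩
    refine ⟨_, hA, ?_⟩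
    rw [iota, mobius_mk hA, iota]
    congr 1
    ext i; fin_cases i <;> simp
  · have hA : !![0, 1; 1, y] ∈ GL2Zp p :=
      ⟨fun i j => by fin_cases i <;> fin_cases j <;> simp [hy.le], by simp [det_fin_two]⟩
    refine ⟨_, hA, ?_⟩
    rw [iota, mobius_mk hA, iotaInfty]
    congr 1
    ext i; fin_cases i <;> simp

theorem measure_closedBall_eq_of_isGLInvariant {ν : Measure (P1 p)} (hν : IsGLInvariant p ν)
    (ξ : P1 p) (r : ℝ) : ν (closedBall p ξ r) = ν (closedBall p (iota p 0) r) := by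
  obtain ⟨A, hA, rfl⟩ := exists_mem_GL2Zp_mobius_iota_zero ξ
  rw [← image_mobius_closedBall hA, hν A hA.1 hA.2 _ (measurableSet_closedBall _ _)]

theorem exists_lt_norm_sub_natCast_le {x : ℚ_[p]} (hx : ‖x‖ ≤ 1) (v : ℕ) :
    ∃ k < p ^ v, ‖x - k‖ ≤ (p : ℝ) ^ (-(v : ℤ)) := by
  let z : ℤ_[p] := ⟨x, hx⟩
  refine ⟨z.appr v, z.appr_lt v, ?_⟩
  have h := (PadicInt.norm_le_pow_iff_mem_span_pow _ v).mpr (z.appr_spec v)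
  rwa [PadicInt.norm_def, PadicInt.coe_sub, PadicInt.coe_natCast] at h

theorem eq_of_norm_natCast_sub_le {v k k' : ℕ} (hk : k < p ^ v) (hk' : k' < p ^ v)
    (h : ‖(k : ℚ_[p]) - k'‖ ≤ (p : ℝ) ^ (-(v : ℤ))) : k = k' := by
  have hdvd := (Padic.norm_int_le_pow_iff_dvd ((k : ℤ) - k') v).mp (by push_cast; exact h)
  exact Nat.ModEq.eq_of_lt_of_lt (Nat.modEq_iff_dvd.mpr (by push_cast; exact hdvd)).symm hk hk'

theorem zpow_neg_natCast_lt_one {v : ℕ} (hv : 1 ≤ v) : (p : ℝ) ^ (-(v : ℤ)) < 1 :=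
  zpow_lt_one_of_neg₀ (by exact_mod_cast (Fact.out : p.Prime).one_lt) (by omega)

variable (p) in
def unitDisk : Set (P1 p) := {ζ | ∃ x : ℚ_[p], ‖x‖ ≤ 1 ∧ ζ = iota p x}

theorem iotaInfty_notMem_closedBall_iota {x y : ℚ_[p]} (hx : ‖x‖ ≤ 1) (hy : ‖y‖ < 1)
    {r : ℝ} (hr : r < 1) : iotaInfty p y ∉ closedBall p (iota p x) r := by
  rw [closedBall, Set.mem_ofPred_eq, pdelta_iota_iotaInfty hx hy]
  exact hr.not_ge

theorem unitDisk_eq_biUnion_closedBall {v : ℕ} (hv : 1 ≤ v) :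
    unitDisk p =
      ⋃ k ∈ Finset.range (p ^ v), closedBall p (iota p k) ((p : ℝ) ^ (-(v : ℤ))) := by
  ext η
  simp only [Set.mem_iUnion, Finset.mem_range, exists_prop]
  constructor
  · rintro ⟨x, hx, rfl⟩
    obtain ⟨k, hk, hkx⟩ := exists_lt_norm_sub_natCast_le hx v
    refine ⟨k, hk, ?_⟩
    rwa [closedBall, Set.mem_ofPred_eq,
      pdelta_iota_iota (IsUltrametricDist.norm_natCast_le_one ℚ_[p] k) hx, norm_sub_rev]
  · rintro ⟨k, -, hη⟩
    rcases iota_or_iotaInfty η with ⟨x, hx, rfl⟩ | ⟨y, hy, rfl⟩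
    · exact ⟨x, hx, rfl⟩
    · exact absurd hη (iotaInfty_notMem_closedBall_iota
        (IsUltrametricDist.norm_natCast_le_one ℚ_[p] k) hy (zpow_neg_natCast_lt_one hv))

theorem pairwiseDisjoint_closedBall_iota {v : ℕ} (hv : 1 ≤ v) :
    (Finset.range (p ^ v) : Set ℕ).PairwiseDisjoint
      fun k => closedBall p (iota p k) ((p : ℝ) ^ (-(v : ℤ))) := by
  intro k hk k' hk' hne
  dsimp only [Function.onFun]
  have hk1 := IsUltrametricDist.norm_natCast_le_one ℚ_[p] k
  have hk1' := IsUltrametricDist.norm_natCast_le_one ℚ_[p] k'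
  refine Set.disjoint_left.mpr fun η hη hη' => hne ?_
  rcases iota_or_iotaInfty η with ⟨x, hx, rfl⟩ | ⟨y, hy, rfl⟩
  · rw [closedBall, Set.mem_ofPred_eq, pdelta_iota_iota hk1 hx] at hη
    rw [closedBall, Set.mem_ofPred_eq, pdelta_iota_iota hk1' hx, norm_sub_rev] at hη'
    refine eq_of_norm_natCast_sub_le (Finset.mem_range.mp hk) (Finset.mem_range.mp hk') ?_
    calc ‖(k : ℚ_[p]) - k'‖ = ‖((k : ℚ_[p]) - x) + (x - k')‖ := by
          rw [sub_add_sub_cancel]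
      _ ≤ max ‖(k : ℚ_[p]) - x‖ ‖x - k'‖ := Padic.nonarchimedean _ _
      _ ≤ _ := max_le hη hη'
  · exact absurd hη (iotaInfty_notMem_closedBall_iota hk1 hy (zpow_neg_natCast_lt_one hv))

theorem compl_closedBall_iotaInfty_zero :
    (closedBall p (iotaInfty p 0) ((p : ℝ) ^ (-1 : ℤ)))ᶜ = unitDisk p := by
  have h0 : ‖(0 : ℚ_[p])‖ < 1 := by simp
  ext η
  rw [Set.mem_compl_iff, closedBall, Set.mem_ofPred_eq]
  constructor
  · intro hη
    rcases iota_or_iotaInfty η with ⟨x, hx, rfl⟩ | ⟨y, hy, rfl⟩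
    · exact ⟨x, hx, rfl⟩
    · rw [pdelta_iotaInfty_iotaInfty h0.le hy.le, zero_sub, norm_neg] at hη
      exact (hη ((Padic.norm_le_pow_iff_norm_lt_pow_add_one y (-1)).mpr (by simpa using hy))).elim
  · rintro ⟨x, hx, rfl⟩
    rw [pdelta_comm, pdelta_iota_iotaInfty hx h0]
    exact (zpow_neg_natCast_lt_one le_rfl).not_ge

theorem measure_unitDisk_eq_pow_mul {ν : Measure (P1 p)} (hν : IsGLInvariant p ν) {v : ℕ}
    (hv : 1 ≤ v) :
    ν (unitDisk p) = p ^ v * ν (closedBall p (iota p 0) ((p : ℝ) ^ (-(v : ℤ)))) := by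
  rw [unitDisk_eq_biUnion_closedBall hv, measure_biUnion_finset
    (pairwiseDisjoint_closedBall_iota hv) fun k _ => measurableSet_closedBall _ _]
  simp only [measure_closedBall_eq_of_isGLInvariant hν (iota p _)]
  rw [Finset.sum_const, Finset.card_range, nsmul_eq_mul, Nat.cast_pow]

theorem measure_closedBall_add_measure_unitDisk {ν : Measure (P1 p)} [IsProbabilityMeasure ν]
    (hν : IsGLInvariant p ν) :
    ν (closedBall p (iota p 0) ((p : ℝ) ^ (-1 : ℤ))) + ν (unitDisk p) = 1 := by
  rw [← compl_closedBall_iotaInfty_zero,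
    ← measure_closedBall_eq_of_isGLInvariant hν (iotaInfty p 0),
    measure_add_measure_compl (measurableSet_closedBall _ _), measure_univ]

theorem statement_17 (p : ℕ) [Fact p.Prime]
    (ν : Measure (P1 p)) [IsProbabilityMeasure ν] (hν : IsGLInvariant p ν)
    (ξ : P1 p) (v : ℕ) (hv : 1 ≤ v) :
    ν {η : P1 p | pdelta p ξ η ≤ (p : ℝ) ^ (-(v : ℤ))} =
      (p : ENNReal) ^ (-(v : ℤ)) * ((p : ENNReal) / ((p : ENNReal) + 1)) ∧
    ν {ζ : P1 p | ∃ x : ℚ_[p], ‖x‖ ≤ 1 ∧ ζ = iota p x} =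
      (p : ENNReal) / ((p : ENNReal) + 1) := by
  have hp0 : (p : ENNReal) ≠ 0 := Nat.cast_ne_zero.mpr (Fact.out : p.Prime).ne_zero
  have hdisk : ν (unitDisk p) = p / (p + 1) := by
    have hD := measure_unitDisk_eq_pow_mul hν (le_refl 1)
    rw [pow_one, Nat.cast_one] at hD
    have hm : ν (closedBall p (iota p 0) ((p : ℝ) ^ (-1 : ℤ))) * (p + 1) = 1 := by
      calc _ = ν (closedBall p (iota p 0) ((p : ℝ) ^ (-1 : ℤ))) + ν (unitDisk p) := by
            rw [hD]; ring
        _ = 1 := measure_closedBall_add_measure_unitDisk hν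
    rw [hD, ENNReal.eq_inv_of_mul_eq_one_left hm, div_eq_mul_inv]
  refine ⟨?_, hdisk⟩
  change ν (closedBall p ξ _) = _
  rw [measure_closedBall_eq_of_isGLInvariant hν, ENNReal.zpow_neg, zpow_natCast, ← hdisk,
    measure_unitDisk_eq_pow_mul hν hv,
    ENNReal.inv_mul_cancel_left (pow_ne_zero _ hp0) (ENNReal.pow_ne_top (ENNReal.natCast_ne_top _))]

end LogCoulomb
end
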